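/- Let M be a real symmetric positive definite n×n matrix, g ∈ ℝⁿ a nonzero vector, and Δ > 0. Then the minimum of the linear objective gᵀx over the trust region {x ∈ ℝⁿ : xᵀMx ≤ Δ} equals -√(Δ · gᵀM⁻¹g) and is attained at x* = -√(Δ/(gᵀM⁻¹g)) · M⁻¹g, a point on the boundary of the trust region proportional to -M⁻¹g. In particular, with M = |H| the solution of the generalized trust region problem is a positive multiple of the saddle-free Newton step -|H|⁻¹g. -/

import Mathlib

open Matrix

/-- Let `M` be real symmetric positive definite, `g ≠ 0` and `Δ > 0`. Then
the minimum of the linear objective `gᵀx` over the trust region `{x : xᵀMx ≤ Δ}` equals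
`-√(Δ · gᵀM⁻¹g)` and is attained at `x* = -√(Δ / (gᵀM⁻¹g)) • M⁻¹g`, a point on the
boundary of the trust region proportional to `-M⁻¹g`. In particular, with `M = |H|` the
solution of the generalized trust region problem is a positive multiple of the
saddle-free Newton step `-|H|⁻¹g`. -/
theorem generalized_trust_region_solution {n : ℕ}
    (M : Matrix (Fin n) (Fin n) ℝ) (hM : M.PosDef)
    (g : Fin n → ℝ) (hg : g ≠ 0) (Δ : ℝ) (hΔ : 0 < Δ) :
    let q : ℝ := g ⬝ᵥ (M⁻¹).mulVec g
    let xstar : Fin n → ℝ := -(Real.sqrt (Δ / q) • (M⁻¹).mulVec g)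
    xstar ⬝ᵥ M.mulVec xstar = Δ ∧
      g ⬝ᵥ xstar = -Real.sqrt (Δ * q) ∧
      ∀ x : Fin n → ℝ, x ⬝ᵥ M.mulVec x ≤ Δ → -Real.sqrt (Δ * q) ≤ g ⬝ᵥ x := by
  intro q xstar
  set v : Fin n → ℝ := (M⁻¹).mulVec g with hv
  have hdet : IsUnit M.det := isUnit_iff_ne_zero.mpr (ne_of_gt hM.det_pos)
  have hMv : M.mulVec v = g := by
    rw [hv, Matrix.mulVec_mulVec, Matrix.mul_nonsing_inv _ hdet, Matrix.one_mulVec]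
  have hq : 0 < q := by
    have := hM.inv.dotProduct_mulVec_pos hg
    simpa [q, hv] using this
  have hsym : Mᵀ = M := hM.1
  -- symmetry facts
  have hvMx : ∀ x : Fin n → ℝ, v ⬝ᵥ M.mulVec x = g ⬝ᵥ x := by
    intro x
    rw [Matrix.dotProduct_mulVec, ← Matrix.mulVec_transpose, hsym, hMv]
  have hxMv : ∀ x : Fin n → ℝ, x ⬝ᵥ M.mulVec v = g ⬝ᵥ x := by
    intro x
    rw [hMv, dotProduct_comm]
  have hvMv : v ⬝ᵥ M.mulVec v = q := by rw [hvMx]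
  have hs : Real.sqrt (Δ / q) ^ 2 = Δ / q := Real.sq_sqrt (le_of_lt (div_pos hΔ hq))
  have hxstar : xstar ⬝ᵥ M.mulVec xstar = Δ := by
    show (-(Real.sqrt (Δ / q) • v)) ⬝ᵥ M.mulVec (-(Real.sqrt (Δ / q) • v)) = Δ
    rw [Matrix.mulVec_neg, neg_dotProduct, dotProduct_neg, neg_neg,
      Matrix.mulVec_smul, smul_dotProduct, dotProduct_smul, hvMv,
      smul_eq_mul, smul_eq_mul, ← mul_assoc, ← sq, hs]
    field_simp
  refine ⟨hxstar, ?_, ?_⟩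
  · show g ⬝ᵥ (-(Real.sqrt (Δ / q) • v)) = -Real.sqrt (Δ * q)
    rw [dotProduct_neg, dotProduct_smul, smul_eq_mul]
    have : Real.sqrt (Δ / q) * (g ⬝ᵥ v) = Real.sqrt (Δ * q) := by
      have hgv : g ⬝ᵥ v = q := rfl
      have hΔq : Δ * q = (Δ / q) * q ^ 2 := by field_simp
      rw [hgv, hΔq, Real.sqrt_mul (le_of_lt (div_pos hΔ hq)), Real.sqrt_sq hq.le]
    rw [this]
  · intro x hx
    set c : ℝ := g ⬝ᵥ x with hc
    -- Cauchy-Schwarz: c^2 ≤ q * (x ⬝ᵥ M.mulVec x)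
    have hxMx : 0 ≤ x ⬝ᵥ M.mulVec x := by
      have := hM.posSemidef.dotProduct_mulVec_nonneg x
      simpa using this
    have hcs : c ^ 2 ≤ q * (x ⬝ᵥ M.mulVec x) := by
      set t : ℝ := -c / q with ht
      have h0 : 0 ≤ (x + t • v) ⬝ᵥ M.mulVec (x + t • v) := by
        have := hM.posSemidef.dotProduct_mulVec_nonneg (x + t • v)
        simpa using this
      have hexp : (x + t • v) ⬝ᵥ M.mulVec (x + t • v)
          = x ⬝ᵥ M.mulVec x + 2 * t * c + t ^ 2 * q := by
        rw [Matrix.mulVec_add, Matrix.mulVec_smul, dotProduct_add,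
          add_dotProduct, add_dotProduct, dotProduct_smul,
          smul_dotProduct, smul_dotProduct, dotProduct_smul,
          hvMv, hvMx, hxMv]
        simp only [smul_eq_mul, hc]
        ring
      rw [hexp, ht] at h0
      have hq' : q ≠ 0 := ne_of_gt hq
      have h1 : 0 ≤ q * (x ⬝ᵥ M.mulVec x + 2 * (-c / q) * c + (-c / q) ^ 2 * q) :=
        mul_nonneg hq.le h0
      have h2 : q * (x ⬝ᵥ M.mulVec x + 2 * (-c / q) * c + (-c / q) ^ 2 * q)
          = q * (x ⬝ᵥ M.mulVec x) - c ^ 2 := by field_simp; ring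
      rw [h2] at h1
      linarith
    have hcs2 : c ^ 2 ≤ Δ * q := by
      calc c ^ 2 ≤ q * (x ⬝ᵥ M.mulVec x) := hcs
        _ ≤ q * Δ := by nlinarith
        _ = Δ * q := mul_comm _ _
    rcases le_or_gt 0 c with h | h
    · linarith [Real.sqrt_nonneg (Δ * q)]
    · have : -c ≤ Real.sqrt (Δ * q) := by
        rw [← Real.sqrt_sq (le_of_lt (neg_pos.mpr h))]
        apply Real.sqrt_le_sqrt
        nlinarith
      linarith
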